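/- Let P = MvPolynomial (Fin 4) ℤ with variables x₁, x₂, x₃, γ, let eᵢ denote the i-th elementary symmetric polynomial in x₁, x₂, x₃ only, let I be the ideal of P generated by e₁, e₂, e₃ − 2γ, and γ², and let A = P ⧸ I. Then the class of γ in A does not lie in the ℤ-subalgebra of A generated by the classes of x₁, x₂, x₃; in particular A is not generated as a ring by its elements of (cohomological) degree two. -/

import Mathlib

/-!
Send `x₁, x₂, x₃ ↦ 0` and `γ ↦ ε` in the dual numbers `𝔽₂[ε]`. All relations survive: the `eᵢ`
vanish, `2γ ↦ 2ε = 0` in characteristic two, and `γ² ↦ ε² = 0`. The induced `ℤ`-algebra map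
on `A` sends the subalgebra generated by the classes of the `xᵢ` into the image of `ℤ`,
which does not contain `ε`.
-/

namespace Stmt18

noncomputable section

/-- The polynomial ring `P = ℤ[x₁, x₂, x₃, γ]`. -/
abbrev P := MvPolynomial (Fin 4) ℤ

def x₁ : P := MvPolynomial.X 0
def x₂ : P := MvPolynomial.X 1
def x₃ : P := MvPolynomial.X 2
def γ : P := MvPolynomial.X 3

/-- The elementary symmetric polynomials in the three variables `x₁, x₂, x₃` only. -/
def e₁ : P := x₁ + x₂ + x₃
def e₂ : P := x₁ * x₂ + x₁ * x₃ + x₂ * x₃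
def e₃ : P := x₁ * x₂ * x₃

/-- The ideal `(e₁, e₂, e₃ − 2γ, γ²)`. -/
def I : Ideal P := Ideal.span {e₁, e₂, e₃ - 2 * γ, γ ^ 2}

/-- The quotient ring `A = P ⧸ I`, realizing `H^*(G₂/T; ℤ)`. -/
abbrev A := P ⧸ I

open DualNumber

theorem _root_.DualNumber.eps_notMem_bot {S R : Type*} [CommSemiring S] [CommSemiring R]
    [Algebra S R] [Nontrivial R] : (ε : R[ε]) ∉ (⊥ : Subalgebra S R[ε]) := by
  rintro ⟨s, hs⟩
  simpa [TrivSqZeroExt.algebraMap_eq_inl'] using congrArg TrivSqZeroExt.snd hs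

theorem _root_.Algebra.notMem_adjoin_of_map_eq_zero {R A B : Type*} [CommSemiring R]
    [Semiring A] [Semiring B] [Algebra R A] [Algebra R B] (φ : A →ₐ[R] B) {s : Set A} {a : A}
    (hs : ∀ x ∈ s, φ x = 0) (ha : φ a ∉ (⊥ : Subalgebra R B)) : a ∉ Algebra.adjoin R s :=
  fun h => ha <| Algebra.adjoin_le (S := (⊥ : Subalgebra R B).comap φ)
    (fun x hx => (Subalgebra.mem_comap _ _ _).2 <| (hs x hx).symm ▸ zero_mem _) h

def evalEps : P →ₐ[ℤ] (ZMod 2)[ε] := MvPolynomial.aeval ![0, 0, 0, ε]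

theorem I_le_ker_evalEps : I ≤ RingHom.ker evalEps := by
  have two_eq_zero : (2 : (ZMod 2)[ε]) = 0 := rfl
  simp [I, Ideal.span_le, Set.insert_subset_iff, evalEps, e₁, e₂, e₃, x₁, x₂, x₃, γ, two_eq_zero]

def toDualNumber : A →ₐ[ℤ] (ZMod 2)[ε] :=
  Ideal.Quotient.liftₐ I evalEps fun _ h => I_le_ker_evalEps h

theorem toDualNumber_mk (p : P) : toDualNumber (Ideal.Quotient.mk I p) = evalEps p := rfl

/-- The class of `γ` in `A` does not lie in the `ℤ`-subalgebra of `A` generated by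
the classes of `x₁, x₂, x₃`; in particular `A` is not generated as a ring by its
elements of cohomological degree two. -/
theorem gamma_not_in_adjoin_degree_two :
    Ideal.Quotient.mk I γ ∉
      Algebra.adjoin ℤ
        ({Ideal.Quotient.mk I x₁, Ideal.Quotient.mk I x₂, Ideal.Quotient.mk I x₃} :
          Set A) := by
  refine Algebra.notMem_adjoin_of_map_eq_zero toDualNumber ?_ ?_
  · simp [toDualNumber_mk, evalEps, x₁, x₂, x₃]
  · simpa [toDualNumber_mk, evalEps, γ] using DualNumber.eps_notMem_bot

end

end Stmt18
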